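/- Equivalence of walks on the triangular lattice (Theorem 2a): if σ_R(p) = -σ_M(p) for every lattice site p, then for any initial position and any initial velocity v_k with k even (k ∈ {0,2,4}), the flipping mirror walk on σ_M and the flipping rotator walk on σ_R have identical position sequences for all times. -/
import Mathlib


/-- The six unit velocities v_k = (cos(kπ/3), sin(kπ/3)) of the triangular
lattice, written in coordinates with respect to the lattice basis
(1,0) and (1/2, √3/2). -/
def triVel (k : ZMod 6) : ℤ × ℤ :=
  if k = 0 then (1, 0) else if k = 1 then (0, 1) else if k = 2 then (-1, 1)
  else if k = 3 then (-1, 0) else if k = 4 then (0, -1) else (1, -1)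

/-- The mirror scattering rule M on 𝕋² (Table 2). -/
def triM (k : ZMod 6) (σ : ℤ) : ZMod 6 :=
  if σ = 1 then
    (if k = 0 then 2 else if k = 1 then 5 else if k = 2 then 4
     else if k = 3 then 1 else if k = 4 then 0 else 3)
  else
    (if k = 0 then 4 else if k = 1 then 3 else if k = 2 then 0
     else if k = 3 then 5 else if k = 4 then 2 else 1)

/-- The rotator scattering rule R on 𝕋² (Table 2). -/
def triR (k : ZMod 6) (σ : ℤ) : ZMod 6 :=
  if σ = 1 then
    (if k = 0 then 4 else if k = 1 then 5 else if k = 2 then 0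
     else if k = 3 then 1 else if k = 4 then 2 else 3)
  else
    (if k = 0 then 2 else if k = 1 then 3 else if k = 2 then 4
     else if k = 3 then 5 else if k = 4 then 0 else 1)

/-- State of a walk on 𝕋²: position (in lattice coordinates), velocity index,
environment of scatterers. -/
structure TriState where
  pos : ℤ × ℤ
  vel : ZMod 6
  env : ℤ × ℤ → ℤ

/-- One step of the flipping dynamics with scattering rule `f`:
the walker is scattered at its current site, moves one step in the new
direction, and the scatterer at the old site flips sign. -/
def triStep (f : ZMod 6 → ℤ → ZMod 6) (s : TriState) : TriState :=
  let k' := f s.vel (s.env s.pos)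
  { pos := s.pos + triVel k', vel := k',
    env := fun q => if q = s.pos then -s.env s.pos else s.env q }

/-- The walk: state after `t` time steps. -/
def triWalk (f : ZMod 6 → ℤ → ZMod 6) (s₀ : TriState) (t : ℕ) : TriState :=
  (triStep f)^[t] s₀

lemma tri_key (k : ZMod 6) (hk : Even k.val) (σ : ℤ) (hσ : σ = 1 ∨ σ = -1) :
    triM k σ = triR k (-σ) ∧ Even (triM k σ).val := by
  rcases hσ with h | h <;> subst h <;> revert hk <;> fin_cases k <;> decide

/-- Invariant relating the mirror state and the rotator state. -/
def triInv (sM sR : TriState) : Prop :=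
  sM.pos = sR.pos ∧ sM.vel = sR.vel ∧ Even sM.vel.val ∧
    (∀ p, sM.env p = 1 ∨ sM.env p = -1) ∧ (∀ p, sR.env p = -sM.env p)

lemma triInv_step (sM sR : TriState) (h : triInv sM sR) :
    triInv (triStep triM sM) (triStep triR sR) := by
  obtain ⟨hpos, hvel, heven, hpm, hrel⟩ := h
  have hkey := tri_key sM.vel heven (sM.env sM.pos) (hpm sM.pos)
  have hv : triM sM.vel (sM.env sM.pos) = triR sR.vel (sR.env sR.pos) := by
    rw [← hvel, ← hpos, hrel sM.pos]; exact hkey.1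
  refine ⟨?_, ?_, ?_, ?_, ?_⟩
  · simp only [triStep]; rw [hv, hpos]
  · simp only [triStep, hv]
  · simpa only [triStep] using hkey.2
  · intro p
    simp only [triStep]
    by_cases hp : p = sM.pos
    · simp only [hp, if_pos rfl]
      rcases hpm sM.pos with h | h <;> simp [h]
    · simpa only [if_neg hp] using hpm p
  · intro p
    simp only [triStep, ← hpos, hrel p, hrel sM.pos]
    by_cases hp : p = sM.pos <;> simp [hp]

/-- Theorem 2a: if σ_R = -σ_M everywhere, then for any initial
position and any initial velocity of even index, the flipping mirror walk on
σ_M and the flipping rotator walk on σ_R have identical positions at all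
times. -/
theorem tri_equivalence_even (σM σR : ℤ × ℤ → ℤ) (hσ : ∀ p, σM p = 1 ∨ σM p = -1)
    (hrel : ∀ p, σR p = -σM p) (p₀ : ℤ × ℤ) (k₀ : ZMod 6) (hk : Even k₀.val) (t : ℕ) :
    (triWalk triM ⟨p₀, k₀, σM⟩ t).pos = (triWalk triR ⟨p₀, k₀, σR⟩ t).pos := by
  suffices h : ∀ t, triInv (triWalk triM ⟨p₀, k₀, σM⟩ t) (triWalk triR ⟨p₀, k₀, σR⟩ t) from
    (h t).1
  intro t
  induction t with
  | zero => exact ⟨rfl, rfl, hk, hσ, hrel⟩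
  | succ n ih =>
    simp only [triWalk] at ih ⊢
    rw [Function.iterate_succ_apply', Function.iterate_succ_apply']
    exact triInv_step _ _ ih
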